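/- Let A and B be two members of a family of convex pseudo-discs of a finite point set P in general position, with neither A ⊆ B nor B ⊆ A. Then exactly one of the following holds: (1) there is exactly one common tangent of the first kind with respect to (A,B) and no common tangent of the second kind; or (2) there is no common tangent of the first kind and exactly two common tangents of the second kind with respect to (A,B). -/

import Mathlib

/-- The planar cross product. -/
def cross2 (u v : ℝ × ℝ) : ℝ := u.1 * v.2 - u.2 * v.1

/-- The directed line through `x` and `y` (as a point set). -/
def lineThrough (x y : ℝ × ℝ) : Set (ℝ × ℝ) := {p | cross2 (y - x) (p - x) = 0}

/-- `A` lies in the closed half-plane to the left of the directed line `x → y`. -/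
def LeftOf (x y : ℝ × ℝ) (A : Finset (ℝ × ℝ)) : Prop :=
  ∀ p ∈ A, 0 ≤ cross2 (y - x) (p - x)

/-- `A ∈ L_x`: `A` lies left of the directed line through `x, y`, which touches
`conv A` at the point `x` only. -/
def MemLx (x y : ℝ × ℝ) (A : Finset (ℝ × ℝ)) : Prop :=
  LeftOf x y A ∧ lineThrough x y ∩ convexHull ℝ (A : Set (ℝ × ℝ)) = {x}

/-- `A ∈ L_y`: the line touches `conv A` at the point `y` only. -/
def MemLy (x y : ℝ × ℝ) (A : Finset (ℝ × ℝ)) : Prop :=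
  LeftOf x y A ∧ lineThrough x y ∩ convexHull ℝ (A : Set (ℝ × ℝ)) = {y}

/-- `A ∈ L_{xy}`: the line supports `conv A` along the full edge `xy`. -/
def MemLxy (x y : ℝ × ℝ) (A : Finset (ℝ × ℝ)) : Prop :=
  LeftOf x y A ∧ lineThrough x y ∩ convexHull ℝ (A : Set (ℝ × ℝ)) = segment ℝ x y

/-- The directed line through the point pair `e = (x, y)` of `P` is a common
tangent of the first kind for `(A, B)`: `A ∈ L_x` and `B ∈ L_y`. -/
def FirstKind (P : Finset (ℝ × ℝ)) (A B : Finset (ℝ × ℝ))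
    (e : (ℝ × ℝ) × (ℝ × ℝ)) : Prop :=
  e.1 ∈ P ∧ e.2 ∈ P ∧ e.1 ≠ e.2 ∧ MemLx e.1 e.2 A ∧ MemLy e.1 e.2 B

/-- Common tangent of the second kind for `(A, B)`:
`A ∈ L_{xy}` and `B ∈ L_y`, or `A ∈ L_x` and `B ∈ L_{xy}`. -/
def SecondKind (P : Finset (ℝ × ℝ)) (A B : Finset (ℝ × ℝ))
    (e : (ℝ × ℝ) × (ℝ × ℝ)) : Prop :=
  e.1 ∈ P ∧ e.2 ∈ P ∧ e.1 ≠ e.2 ∧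
    ((MemLxy e.1 e.2 A ∧ MemLy e.1 e.2 B) ∨
     (MemLx e.1 e.2 A ∧ MemLxy e.1 e.2 B))

/-!
A *bridge* from `A` to `B` is a counterclockwise edge `x → y` of `conv (A ∪ B)` with `x ∈ A`
and `y ∈ B`. Since `A` and `B` are cut out of `P` by convex sets and `P` is in general position,
the tangents of the first kind are the bridges with `x ∉ B` and `y ∉ A`, and those of the second
kind are the bridges satisfying exactly one of these two conditions. The theorem therefore
reduces to: there is exactly one bridge with `x ∉ B`, and exactly one with `y ∉ A`. Case (1)
is when they coincide, case (2) when they differ.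

Such bridges exist because the supporting lines of `A` and `B` must coincide at some angle
while a direction rotates from one in which `A` sticks out of `B` to one in which `B` sticks
out of `A`. For uniqueness, two bridges `x → y`, `x' → y'` with `y, y' ∉ A` span a convex
quadrilateral whose diagonal `xx'` meets `conv B` only inside `conv A`, while `y` and `y'`
lie on opposite sides of it. This disconnects `conv B \ conv A`, which contradicts the
pseudo-disc property. The other case is symmetric.
-/

open Set Filter Topology Real

lemma isLinearMap_cross2 (u : ℝ × ℝ) : IsLinearMap ℝ (cross2 u) where
  map_add v w := by simp only [cross2, Prod.fst_add, Prod.snd_add]; ring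
  map_smul c v := by simp only [cross2, Prod.smul_fst, Prod.smul_snd, smul_eq_mul]; ring

lemma cross2_sub_right (u v w : ℝ × ℝ) : cross2 u (v - w) = cross2 u v - cross2 u w :=
  (isLinearMap_cross2 u).map_sub v w

lemma mem_lineThrough_left (x y : ℝ × ℝ) : x ∈ lineThrough x y := by
  simp [lineThrough, cross2]

lemma mem_lineThrough_right (x y : ℝ × ℝ) : y ∈ lineThrough x y := by
  simp only [lineThrough, cross2, mem_ofPred_eq]; ring

lemma convex_lineThrough (x y : ℝ × ℝ) : Convex ℝ (lineThrough x y) := by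
  have := convex_hyperplane (isLinearMap_cross2 (y - x)) (cross2 (y - x) x)
  simpa only [lineThrough, cross2_sub_right, sub_eq_zero] using this

lemma cross2_self (u : ℝ × ℝ) : cross2 u u = 0 := by
  simp only [cross2]; ring

lemma cross2_antisymm (u v : ℝ × ℝ) : cross2 u v = -cross2 v u := by
  simp only [cross2]; ring

lemma cross2_sub_rotate (a b c : ℝ × ℝ) : cross2 (b - a) (c - a) = cross2 (c - b) (a - b) := by
  simp only [cross2, Prod.fst_sub, Prod.snd_sub]; ring

lemma exists_eq_lineMap_of_cross2_eq_zero {x y p : ℝ × ℝ} (hxy : x ≠ y)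
    (h : cross2 (y - x) (p - x) = 0) : ∃ t : ℝ, p = AffineMap.lineMap x y t := by
  have hu : (y.1 - x.1) ^ 2 + (y.2 - x.2) ^ 2 ≠ 0 := by
    intro h0
    refine hxy (Prod.ext ?_ ?_) <;> nlinarith [sq_nonneg (y.1 - x.1), sq_nonneg (y.2 - x.2)]
  refine ⟨((y.1 - x.1) * (p.1 - x.1) + (y.2 - x.2) * (p.2 - x.2)) /
    ((y.1 - x.1) ^ 2 + (y.2 - x.2) ^ 2), ?_⟩
  simp only [cross2, Prod.fst_sub, Prod.snd_sub] at h
  rw [AffineMap.lineMap_apply_module', Prod.ext_iff]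
  simp only [Prod.fst_add, Prod.snd_add, Prod.smul_fst, Prod.smul_snd, Prod.fst_sub,
    Prod.snd_sub, smul_eq_mul]
  constructor <;> field_simp
  · linear_combination (-(y.2 - x.2)) * h
  · linear_combination (y.1 - x.1) * h

lemma collinear_of_cross2_eq_zero {x y p : ℝ × ℝ} (hxy : x ≠ y)
    (h : cross2 (y - x) (p - x) = 0) : Collinear ℝ ({x, y, p} : Set (ℝ × ℝ)) := by
  obtain ⟨t, rfl⟩ := exists_eq_lineMap_of_cross2_eq_zero hxy h
  rw [Set.pair_comm, Set.insert_comm]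
  exact collinear_insert_of_mem_affineSpan_pair (AffineMap.lineMap_mem_affineSpan_pair t x y)

def InGeneralPosition (P : Finset (ℝ × ℝ)) : Prop :=
  ∀ p ∈ P, ∀ q ∈ P, ∀ r ∈ P, p ≠ q → p ≠ r → q ≠ r → ¬ Collinear ℝ ({p, q, r} : Set (ℝ × ℝ))

lemma InGeneralPosition.eq_or_eq_of_cross2_eq_zero {P : Finset (ℝ × ℝ)} (hP : InGeneralPosition P)
    {x y p : ℝ × ℝ} (hx : x ∈ P) (hy : y ∈ P) (hp : p ∈ P) (hxy : x ≠ y)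
    (h : cross2 (y - x) (p - x) = 0) : p = x ∨ p = y := by
  by_contra! hpxy
  exact hP x hx y hy p hp hxy hpxy.1.symm hpxy.2.symm (collinear_of_cross2_eq_zero hxy h)

lemma InGeneralPosition.cross2_pos {P V : Finset (ℝ × ℝ)} (hP : InGeneralPosition P) (hVP : V ⊆ P)
    {x y p : ℝ × ℝ} (hx : x ∈ P) (hy : y ∈ P) (hxy : x ≠ y) (hL : LeftOf x y V) (hp : p ∈ V)
    (hpx : p ≠ x) (hpy : p ≠ y) : 0 < cross2 (y - x) (p - x) := by
  refine (hL p hp).lt_of_ne fun h => ?_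
  rcases hP.eq_or_eq_of_cross2_eq_zero hx hy (hVP hp) hxy h.symm with h | h <;> contradiction

lemma leftOf_union {x y : ℝ × ℝ} {A B : Finset (ℝ × ℝ)} :
    LeftOf x y (A ∪ B) ↔ LeftOf x y A ∧ LeftOf x y B := by
  simp only [LeftOf, Finset.mem_union, or_imp, forall_and]

lemma LeftOf.cross2_nonneg_of_mem_convexHull {x y z : ℝ × ℝ} {A : Finset (ℝ × ℝ)}
    (hL : LeftOf x y A) (hz : z ∈ convexHull ℝ (A : Set (ℝ × ℝ))) :
    0 ≤ cross2 (y - x) (z - x) := by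
  have hconv := convex_halfSpace_ge (isLinearMap_cross2 (y - x)) (cross2 (y - x) x)
  have := convexHull_min (fun p hp => by simpa [cross2_sub_right] using hL p hp) hconv hz
  simpa [cross2_sub_right] using this

lemma mem_convexHull_filter_of_apply_eq {E : Type*} [AddCommGroup E] [Module ℝ E]
    {S : Finset E} {f : E →ₗ[ℝ] ℝ} {c : ℝ} (hS : ∀ p ∈ S, c ≤ f p) {z : E}
    (hz : z ∈ convexHull ℝ (S : Set E)) (hzc : f z = c) :
    z ∈ convexHull ℝ (S.filter (fun p => f p = c) : Set E) := by
  classical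
  obtain ⟨w, hw0, hw1, rfl⟩ := Finset.mem_convexHull'.1 hz
  have hsum : ∑ p ∈ S, w p * (f p - c) = 0 := by
    simp only [mul_sub, Finset.sum_sub_distrib, ← Finset.sum_mul, hw1, one_mul, ← hzc,
      map_sum, map_smul, smul_eq_mul, sub_self]
  have hoff : ∀ p ∈ S, w p ≠ 0 → f p = c := fun p hp hwp => by
    have := (Finset.sum_eq_zero_iff_of_nonneg fun q hq =>
      mul_nonneg (hw0 q hq) (sub_nonneg.2 (hS q hq))).1 hsum p hp
    linarith [(mul_eq_zero.1 this).resolve_left hwp]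
  refine Finset.mem_convexHull'.2 ⟨w, fun p hp => hw0 p (Finset.mem_filter.1 hp).1, ?_, ?_⟩
  · rw [Finset.sum_filter_of_ne hoff, hw1]
  · exact Finset.sum_filter_of_ne fun p hp hwp => hoff p hp fun h => hwp (by simp [h])

lemma lineThrough_inter_convexHull {P A : Finset (ℝ × ℝ)} (hP : InGeneralPosition P)
    (hAP : A ⊆ P) {x y : ℝ × ℝ} (hx : x ∈ P) (hy : y ∈ P) (hxy : x ≠ y) (hL : LeftOf x y A) :
    lineThrough x y ∩ convexHull ℝ (A : Set (ℝ × ℝ)) = convexHull ℝ ({x, y} ∩ A) := by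
  classical
  apply Subset.antisymm
  · rintro z ⟨hzL, hzA⟩
    have hface := mem_convexHull_filter_of_apply_eq (f := (isLinearMap_cross2 (y - x)).mk')
      (c := cross2 (y - x) x) (fun p hp => by simpa [cross2_sub_right] using hL p hp) hzA
      (by simpa [lineThrough, cross2_sub_right, sub_eq_zero] using hzL)
    refine convexHull_mono (fun p hp => ?_) hface
    obtain ⟨hpA, hpL⟩ := Finset.mem_filter.1 hp
    refine ⟨?_, hpA⟩
    have := hP.eq_or_eq_of_cross2_eq_zero hx hy (hAP hpA) hxy
      (by simpa [cross2_sub_right, sub_eq_zero] using hpL)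
    simpa using this
  · refine convexHull_min (fun p ⟨hp, hpA⟩ => ⟨?_, subset_convexHull ℝ _ hpA⟩)
      ((convex_lineThrough x y).inter (convex_convexHull ℝ _))
    rcases hp with rfl | rfl
    exacts [mem_lineThrough_left _ _, mem_lineThrough_right _ _]

def IsConvexIn (P A : Finset (ℝ × ℝ)) : Prop :=
  ∃ C : Set (ℝ × ℝ), Convex ℝ C ∧ (A : Set (ℝ × ℝ)) = ↑P ∩ C

lemma IsConvexIn.subset {P A : Finset (ℝ × ℝ)} (hA : IsConvexIn P A) : A ⊆ P := by
  obtain ⟨C, -, hAC⟩ := hA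
  intro a ha
  exact_mod_cast (hAC.le ha).1

lemma IsConvexIn.mem_of_mem_convexHull {P A : Finset (ℝ × ℝ)} (hA : IsConvexIn P A)
    {p : ℝ × ℝ} (hp : p ∈ P) (hpA : p ∈ convexHull ℝ (A : Set (ℝ × ℝ))) : p ∈ A := by
  obtain ⟨C, hC, hAC⟩ := hA
  have hAC' : (A : Set (ℝ × ℝ)) ⊆ C := hAC.le.trans inter_subset_right
  exact_mod_cast hAC.ge ⟨hp, convexHull_min hAC' hC hpA⟩

section Contact

variable {P A : Finset (ℝ × ℝ)} (hP : InGeneralPosition P) (hA : IsConvexIn P A)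
  {x y : ℝ × ℝ} (hx : x ∈ P) (hy : y ∈ P) (hxy : x ≠ y)
include hP hA hx hy hxy

lemma memLx_iff : MemLx x y A ↔ LeftOf x y A ∧ x ∈ A ∧ y ∉ A := by
  refine ⟨fun ⟨hL, hxA⟩ => ⟨hL, ?_, fun hyA => ?_⟩, fun ⟨hL, hxA, hyA⟩ => ⟨hL, ?_⟩⟩
  · exact hA.mem_of_mem_convexHull hx (hxA.ge rfl).2
  · exact hxy (hxA.le ⟨mem_lineThrough_right x y, subset_convexHull ℝ _ hyA⟩).symm
  · rw [lineThrough_inter_convexHull hP hA.subset hx hy hxy hL, insert_inter_of_mem hxA,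
      singleton_inter_eq_empty.2 hyA, insert_empty_eq, convexHull_singleton]

lemma memLy_iff : MemLy x y A ↔ LeftOf x y A ∧ x ∉ A ∧ y ∈ A := by
  refine ⟨fun ⟨hL, hyA⟩ => ⟨hL, fun hxA => ?_, ?_⟩, fun ⟨hL, hxA, hyA⟩ => ⟨hL, ?_⟩⟩
  · exact hxy (hyA.le ⟨mem_lineThrough_left x y, subset_convexHull ℝ _ hxA⟩)
  · exact hA.mem_of_mem_convexHull hy (hyA.ge rfl).2
  · rw [lineThrough_inter_convexHull hP hA.subset hx hy hxy hL, insert_inter_of_notMem hxA,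
      singleton_inter_of_mem hyA, convexHull_singleton]

lemma memLxy_iff : MemLxy x y A ↔ LeftOf x y A ∧ x ∈ A ∧ y ∈ A := by
  refine ⟨fun ⟨hL, hxyA⟩ => ⟨hL, ?_, ?_⟩, fun ⟨hL, hxA, hyA⟩ => ⟨hL, ?_⟩⟩
  · exact hA.mem_of_mem_convexHull hx (hxyA.ge (left_mem_segment ℝ x y)).2
  · exact hA.mem_of_mem_convexHull hy (hxyA.ge (right_mem_segment ℝ x y)).2
  · rw [lineThrough_inter_convexHull hP hA.subset hx hy hxy hL, insert_inter_of_mem hxA,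
      singleton_inter_of_mem hyA, convexHull_pair]

end Contact

def IsBridge (A B : Finset (ℝ × ℝ)) (e : (ℝ × ℝ) × (ℝ × ℝ)) : Prop :=
  e.1 ∈ A ∧ e.2 ∈ B ∧ LeftOf e.1 e.2 (A ∪ B)

section Kinds

variable {P A B : Finset (ℝ × ℝ)} (hP : InGeneralPosition P) (hA : IsConvexIn P A)
  (hB : IsConvexIn P B)
include hP hA hB

lemma firstKind_iff (e : (ℝ × ℝ) × (ℝ × ℝ)) :
    FirstKind P A B e ↔ IsBridge A B e ∧ e.1 ∉ B ∧ e.2 ∉ A := by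
  obtain ⟨x, y⟩ := e
  constructor
  · rintro ⟨hx, hy, hxy, hLx, hLy⟩
    rw [memLx_iff hP hA hx hy hxy] at hLx
    rw [memLy_iff hP hB hx hy hxy] at hLy
    exact ⟨⟨hLx.2.1, hLy.2.2, leftOf_union.2 ⟨hLx.1, hLy.1⟩⟩, hLy.2.1, hLx.2.2⟩
  · rintro ⟨⟨hxA, hyB, hL⟩, hxB, hyA⟩
    have hx := hA.subset hxA
    have hy := hB.subset hyB
    have hxy : x ≠ y := fun h => hxB (h ▸ hyB)
    exact ⟨hx, hy, hxy, (memLx_iff hP hA hx hy hxy).2 ⟨(leftOf_union.1 hL).1, hxA, hyA⟩,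
      (memLy_iff hP hB hx hy hxy).2 ⟨(leftOf_union.1 hL).2, hxB, hyB⟩⟩

lemma secondKind_iff (e : (ℝ × ℝ) × (ℝ × ℝ)) :
    SecondKind P A B e ↔ IsBridge A B e ∧ Xor (e.1 ∉ B) (e.2 ∉ A) := by
  obtain ⟨x, y⟩ := e
  constructor
  · rintro ⟨hx, hy, hxy, ⟨hLxy, hLy⟩ | ⟨hLx, hLxy⟩⟩
    · rw [memLxy_iff hP hA hx hy hxy] at hLxy
      rw [memLy_iff hP hB hx hy hxy] at hLy
      exact ⟨⟨hLxy.2.1, hLy.2.2, leftOf_union.2 ⟨hLxy.1, hLy.1⟩⟩,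
        Or.inl ⟨hLy.2.1, not_not.2 hLxy.2.2⟩⟩
    · rw [memLx_iff hP hA hx hy hxy] at hLx
      rw [memLxy_iff hP hB hx hy hxy] at hLxy
      exact ⟨⟨hLx.2.1, hLxy.2.2, leftOf_union.2 ⟨hLx.1, hLxy.1⟩⟩,
        Or.inr ⟨hLx.2.2, not_not.2 hLxy.2.1⟩⟩
  · rintro ⟨⟨hxA, hyB, hL⟩, hxor⟩
    have hx := hA.subset hxA
    have hy := hB.subset hyB
    have hxy : x ≠ y := by
      rintro rfl
      rcases hxor with ⟨hxB, -⟩ | ⟨hyA, -⟩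
      exacts [hxB hyB, hyA hxA]
    refine ⟨hx, hy, hxy, ?_⟩
    simp only [memLx_iff hP hA hx hy hxy, memLy_iff hP hB hx hy hxy,
      memLxy_iff hP hA hx hy hxy, memLxy_iff hP hB hx hy hxy]
    obtain ⟨hLA, hLB⟩ := leftOf_union.1 hL
    rcases hxor with ⟨hxB, hyA⟩ | ⟨hyA, hxB⟩
    · exact Or.inl ⟨⟨hLA, hxA, not_not.1 hyA⟩, hLB, hxB, hyB⟩
    · exact Or.inr ⟨⟨hLA, hxA, hyA⟩, hLB, not_not.1 hxB, hyB⟩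

end Kinds

lemma xor_existsUnique_and_or_two {α : Type*} {T p q : α → Prop}
    (hp : ∃! e, T e ∧ p e) (hq : ∃! e, T e ∧ q e) :
    Xor
      ((∃! e, T e ∧ p e ∧ q e) ∧ ∀ e, ¬ (T e ∧ Xor (p e) (q e)))
      ((∀ e, ¬ (T e ∧ p e ∧ q e)) ∧
        ∃ e₁ e₂, e₁ ≠ e₂ ∧ (T e₁ ∧ Xor (p e₁) (q e₁)) ∧ (T e₂ ∧ Xor (p e₂) (q e₂)) ∧
          ∀ e, T e ∧ Xor (p e) (q e) → e = e₁ ∨ e = e₂) := by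
  obtain ⟨u, ⟨hTu, hpu⟩, hu⟩ := hp
  obtain ⟨d, ⟨hTd, hqd⟩, hd⟩ := hq
  by_cases hud : u = d
  · subst hud
    refine Or.inl ⟨⟨⟨u, ⟨hTu, hpu, hqd⟩, fun e he => hu e ⟨he.1, he.2.1⟩⟩, ?_⟩, ?_⟩
    · rintro e ⟨hTe, ⟨hpe, hqe⟩ | ⟨hqe, hpe⟩⟩
      · exact hqe (hu e ⟨hTe, hpe⟩ ▸ hqd)
      · exact hpe (hd e ⟨hTe, hqe⟩ ▸ hpu)
    · exact fun h => h.1 u ⟨hTu, hpu, hqd⟩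
  · have hqu : ¬ q u := fun h => hud (hd u ⟨hTu, h⟩)
    have hpd : ¬ p d := fun h => hud (hu d ⟨hTd, h⟩).symm
    refine Or.inr ⟨⟨fun e he => hud ((hu e ⟨he.1, he.2.1⟩).symm.trans (hd e ⟨he.1, he.2.2⟩)),
      u, d, hud, ⟨hTu, Or.inl ⟨hpu, hqu⟩⟩, ⟨hTd, Or.inr ⟨hqd, hpd⟩⟩, ?_⟩, ?_⟩
    · rintro e ⟨hTe, ⟨hpe, -⟩ | ⟨hqe, -⟩⟩
      exacts [Or.inl (hu e ⟨hTe, hpe⟩), Or.inr (hd e ⟨hTe, hqe⟩)]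
    · rintro ⟨⟨e, ⟨hTe, hpe, hqe⟩, -⟩, -⟩
      exact hud ((hu e ⟨hTe, hpe⟩).symm.trans (hd e ⟨hTe, hqe⟩))

lemma InGeneralPosition.eq_of_leftOf_of_leftOf_left {P V : Finset (ℝ × ℝ)}
    (hP : InGeneralPosition P) (hVP : V ⊆ P) {x y y' : ℝ × ℝ} (hx : x ∈ P) (hy : y ∈ V)
    (hy' : y' ∈ V) (hxy : x ≠ y) (hxy' : x ≠ y') (hL : LeftOf x y V) (hL' : LeftOf x y' V) :
    y = y' := by
  by_contra hyy'
  have h := hP.cross2_pos hVP hx (hVP hy) hxy hL hy' hxy'.symm (Ne.symm hyy')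
  have h' := hP.cross2_pos hVP hx (hVP hy') hxy' hL' hy hxy.symm hyy'
  linarith [cross2_antisymm (y - x) (y' - x)]

lemma InGeneralPosition.eq_of_leftOf_of_leftOf_right {P V : Finset (ℝ × ℝ)}
    (hP : InGeneralPosition P) (hVP : V ⊆ P) {x x' y : ℝ × ℝ} (hx : x ∈ V) (hx' : x' ∈ V)
    (hy : y ∈ P) (hxy : x ≠ y) (hx'y : x' ≠ y) (hL : LeftOf x y V) (hL' : LeftOf x' y V) :
    x = x' := by
  by_contra hxx'
  have h := hP.cross2_pos hVP (hVP hx) hy hxy hL hx' (Ne.symm hxx') hx'y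
  have h' := hP.cross2_pos hVP (hVP hx') hy hx'y hL' hx hxx' hxy
  have : cross2 (y - x) (x' - x) + cross2 (y - x') (x - x') = 0 := by
    simp only [cross2, Prod.fst_sub, Prod.snd_sub]; ring
  linarith

lemma InGeneralPosition.cross2_pos_of_leftOf_of_leftOf {P V : Finset (ℝ × ℝ)}
    (hP : InGeneralPosition P) (hVP : V ⊆ P) {x y x' y' : ℝ × ℝ} (hx : x ∈ V) (hy : y ∈ V)
    (hx' : x' ∈ V) (hy' : y' ∈ V) (hxy : x ≠ y) (hx'y' : x' ≠ y') (hxy' : x ≠ y')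
    (hx'y : x' ≠ y) (hL : LeftOf x y V) (hL' : LeftOf x' y' V) (hne : (x, y) ≠ (x', y')) :
    0 < cross2 (y - x) (x' - x) ∧ 0 < cross2 (y - x) (y' - x) ∧
      0 < cross2 (y' - x') (x - x') ∧ 0 < cross2 (y' - x') (y - x') := by
  have hxx' : x ≠ x' := by
    rintro rfl
    exact hne (by rw [hP.eq_of_leftOf_of_leftOf_left hVP (hVP hx) hy hy' hxy hxy' hL hL'])
  have hyy' : y ≠ y' := by
    rintro rfl
    exact hne (by rw [hP.eq_of_leftOf_of_leftOf_right hVP hx hx' (hVP hy) hxy hx'y hL hL'])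
  exact ⟨hP.cross2_pos hVP (hVP hx) (hVP hy) hxy hL hx' hxx'.symm hx'y,
    hP.cross2_pos hVP (hVP hx) (hVP hy) hxy hL hy' hxy'.symm hyy'.symm,
    hP.cross2_pos hVP (hVP hx') (hVP hy') hx'y' hL' hx hxx' hxy',
    hP.cross2_pos hVP (hVP hx') (hVP hy') hx'y' hL' hy hx'y.symm hyy'⟩

/-- The lines `x → y` and `x' → y'` support `S` at `u` and at `v` respectively. -/
lemma mem_segment_of_cross2_eq_zero {S : Set (ℝ × ℝ)} {x y x' y' u v z : ℝ × ℝ}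
    (hL : ∀ w ∈ S, 0 ≤ cross2 (y - x) (w - x)) (hL' : ∀ w ∈ S, 0 ≤ cross2 (y' - x') (w - x'))
    (hu : cross2 (y - x) (u - x) = 0) (hv : 0 < cross2 (y - x) (v - x))
    (hv' : cross2 (y' - x') (v - x') = 0) (hu' : 0 < cross2 (y' - x') (u - x'))
    (hz : z ∈ S) (hzuv : cross2 (v - u) (z - u) = 0) : z ∈ segment ℝ u v := by
  have huv : u ≠ v := by rintro rfl; linarith
  obtain ⟨t, rfl⟩ := exists_eq_lineMap_of_cross2_eq_zero huv hzuv
  have hzL := hL _ hz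
  have hzL' := hL' _ hz
  simp only [AffineMap.lineMap_apply_module', cross2, Prod.fst_add, Prod.snd_add,
    Prod.fst_sub, Prod.snd_sub, Prod.smul_fst, Prod.smul_snd, smul_eq_mul] at *
  rw [segment_eq_image_lineMap]
  refine ⟨t, ⟨?_, ?_⟩, rfl⟩ <;> nlinarith

lemma not_isPreconnected_diff_of_cross2 {T K : Set (ℝ × ℝ)} {u v w w' : ℝ × ℝ}
    (hchord : ∀ z ∈ T, cross2 (v - u) (z - u) = 0 → z ∈ K) (hw : w ∈ T \ K) (hw' : w' ∈ T \ K)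
    (hneg : cross2 (v - u) (w - u) < 0) (hpos : 0 < cross2 (v - u) (w' - u)) :
    ¬ IsPreconnected (T \ K) := by
  intro hpre
  have hcont : Continuous fun z => cross2 (v - u) (z - u) := by unfold cross2; fun_prop
  obtain ⟨z, hz, hz0⟩ := hpre.intermediate_value hw hw' hcont.continuousOn ⟨hneg.le, hpos.le⟩
  exact hz.2 (hchord z hz.1 hz0)

section Uniqueness

variable {P A B : Finset (ℝ × ℝ)} (hP : InGeneralPosition P) (hA : IsConvexIn P A)
  (hB : IsConvexIn P B)
include hP hA hB

lemma IsBridge.eq_of_snd_notMem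
    (hpre : IsPreconnected (convexHull ℝ (B : Set (ℝ × ℝ)) \ convexHull ℝ (A : Set (ℝ × ℝ))))
    {e e' : (ℝ × ℝ) × (ℝ × ℝ)} (he : IsBridge A B e) (he' : IsBridge A B e')
    (hy : e.2 ∉ A) (hy' : e'.2 ∉ A) : e = e' := by
  rcases e with ⟨x, y⟩
  rcases e' with ⟨x', y'⟩
  obtain ⟨hxA, hyB, hL⟩ : x ∈ A ∧ y ∈ B ∧ LeftOf x y (A ∪ B) := he
  obtain ⟨hx'A, hy'B, hL'⟩ : x' ∈ A ∧ y' ∈ B ∧ LeftOf x' y' (A ∪ B) := he'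
  simp only at hy hy'
  by_contra hne
  have hVP : A ∪ B ⊆ P := Finset.union_subset hA.subset hB.subset
  obtain ⟨h₁, -, h₃, -⟩ := hP.cross2_pos_of_leftOf_of_leftOf hVP (Finset.mem_union_left _ hxA)
    (Finset.mem_union_right _ hyB) (Finset.mem_union_left _ hx'A) (Finset.mem_union_right _ hy'B)
    (ne_of_mem_of_not_mem hxA hy) (ne_of_mem_of_not_mem hx'A hy')
    (ne_of_mem_of_not_mem hxA hy') (ne_of_mem_of_not_mem hx'A hy) hL hL' hne
  refine not_isPreconnected_diff_of_cross2 (u := x) (v := x') (fun z hzB hz0 => ?_)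
    ⟨subset_convexHull ℝ _ hyB, fun h => hy (hA.mem_of_mem_convexHull (hB.subset hyB) h)⟩
    ⟨subset_convexHull ℝ _ hy'B, fun h => hy' (hA.mem_of_mem_convexHull (hB.subset hy'B) h)⟩
    (by linarith [cross2_antisymm (x' - x) (y - x)])
    (by linarith [cross2_sub_rotate x x' y']) hpre
  have hzV : z ∈ convexHull ℝ ((A ∪ B : Finset (ℝ × ℝ)) : Set (ℝ × ℝ)) :=
    convexHull_mono (by simp) hzB
  exact (convex_convexHull ℝ _).segment_subset (subset_convexHull ℝ _ hxA)
    (subset_convexHull ℝ _ hx'A) (mem_segment_of_cross2_eq_zero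
      (fun w hw => LeftOf.cross2_nonneg_of_mem_convexHull hL hw)
      (fun w hw => LeftOf.cross2_nonneg_of_mem_convexHull hL' hw)
      (by simp [cross2]) h₁ (by simp [cross2]) h₃ hzV hz0)

lemma IsBridge.eq_of_fst_notMem
    (hpre : IsPreconnected (convexHull ℝ (A : Set (ℝ × ℝ)) \ convexHull ℝ (B : Set (ℝ × ℝ))))
    {e e' : (ℝ × ℝ) × (ℝ × ℝ)} (he : IsBridge A B e) (he' : IsBridge A B e')
    (hx : e.1 ∉ B) (hx' : e'.1 ∉ B) : e = e' := by
  rcases e with ⟨x, y⟩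
  rcases e' with ⟨x', y'⟩
  obtain ⟨hxA, hyB, hL⟩ : x ∈ A ∧ y ∈ B ∧ LeftOf x y (A ∪ B) := he
  obtain ⟨hx'A, hy'B, hL'⟩ : x' ∈ A ∧ y' ∈ B ∧ LeftOf x' y' (A ∪ B) := he'
  simp only at hx hx'
  by_contra hne
  have hVP : A ∪ B ⊆ P := Finset.union_subset hA.subset hB.subset
  obtain ⟨-, h₂, -, h₄⟩ := hP.cross2_pos_of_leftOf_of_leftOf hVP (Finset.mem_union_left _ hxA)
    (Finset.mem_union_right _ hyB) (Finset.mem_union_left _ hx'A) (Finset.mem_union_right _ hy'B)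
    (ne_of_mem_of_not_mem hyB hx).symm (ne_of_mem_of_not_mem hy'B hx').symm
    (ne_of_mem_of_not_mem hy'B hx).symm (ne_of_mem_of_not_mem hyB hx').symm hL hL' hne
  refine not_isPreconnected_diff_of_cross2 (u := y) (v := y') (fun z hzA hz0 => ?_)
    ⟨subset_convexHull ℝ _ hx'A, fun h => hx' (hB.mem_of_mem_convexHull (hA.subset hx'A) h)⟩
    ⟨subset_convexHull ℝ _ hxA, fun h => hx (hB.mem_of_mem_convexHull (hA.subset hxA) h)⟩
    (by linarith [cross2_sub_rotate x' y y', cross2_antisymm (y - x') (y' - x')])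
    (by linarith [cross2_sub_rotate x y y']) hpre
  have hzV : z ∈ convexHull ℝ ((A ∪ B : Finset (ℝ × ℝ)) : Set (ℝ × ℝ)) :=
    convexHull_mono (by simp) hzA
  exact (convex_convexHull ℝ _).segment_subset (subset_convexHull ℝ _ hyB)
    (subset_convexHull ℝ _ hy'B) (mem_segment_of_cross2_eq_zero
      (fun w hw => LeftOf.cross2_nonneg_of_mem_convexHull hL hw)
      (fun w hw => LeftOf.cross2_nonneg_of_mem_convexHull hL' hw)
      (cross2_self _) h₂ (cross2_self _) h₄ hzV hz0)

end Uniqueness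

noncomputable def height (θ : ℝ) (p : ℝ × ℝ) : ℝ := p.1 * cos θ + p.2 * sin θ

lemma continuous_height (p : ℝ × ℝ) : Continuous fun θ => height θ p := by
  unfold height; fun_prop

lemma height_add_int_mul_two_pi (θ : ℝ) (k : ℤ) (p : ℝ × ℝ) :
    height (θ + k * (2 * π)) p = height θ p := by
  simp only [height, cos_add_int_mul_two_pi, sin_add_int_mul_two_pi]

noncomputable def minHeight (S : Finset (ℝ × ℝ)) (hS : S.Nonempty) (θ : ℝ) : ℝ :=
  S.inf' hS (height θ)

lemma continuous_minHeight {S : Finset (ℝ × ℝ)} (hS : S.Nonempty) : Continuous (minHeight S hS) :=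
  Continuous.finset_inf'_apply hS fun p _ => continuous_height p

lemma minHeight_add_int_mul_two_pi {S : Finset (ℝ × ℝ)} (hS : S.Nonempty) (θ : ℝ) (k : ℤ) :
    minHeight S hS (θ + k * (2 * π)) = minHeight S hS θ := by
  simp only [minHeight, height_add_int_mul_two_pi]

def Protrudes (A B : Finset (ℝ × ℝ)) : Prop :=
  ∃ θ, ∃ a ∈ A, ∀ b ∈ B, height θ a < height θ b

lemma Protrudes.nonempty {A B : Finset (ℝ × ℝ)} (h : Protrudes A B) : A.Nonempty :=
  let ⟨_, a, ha, _⟩ := h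
  ⟨a, ha⟩

lemma protrudes_of_notMem_convexHull {A B : Finset (ℝ × ℝ)} {a : ℝ × ℝ} (ha : a ∈ A)
    (haB : a ∉ convexHull ℝ (B : Set (ℝ × ℝ))) : Protrudes A B := by
  obtain ⟨f, u, hfa, hfB⟩ := geometric_hahn_banach_point_closed (convex_convexHull ℝ _)
    (B.finite_toSet.isCompact_convexHull (𝕜 := ℝ)).isClosed haB
  set z : ℂ := ⟨f (1, 0), f (0, 1)⟩
  have hf : ∀ p, f p = ‖z‖ * height z.arg p := fun p => by
    have hp : p = p.1 • ((1 : ℝ), (0 : ℝ)) + p.2 • ((0 : ℝ), (1 : ℝ)) := by ext <;> simp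
    rw [hp, map_add, map_smul, map_smul, smul_eq_mul, smul_eq_mul]
    simp only [height, Prod.fst_add, Prod.snd_add, Prod.smul_fst, Prod.smul_snd, smul_eq_mul]
    linear_combination (-p.1) * Complex.norm_mul_cos_arg z - p.2 * Complex.norm_mul_sin_arg z
  refine ⟨z.arg, a, ha, fun b hb => ?_⟩
  have hab := hfa.trans (hfB b (subset_convexHull ℝ _ hb))
  rw [hf, hf] at hab
  exact lt_of_mul_lt_mul_left hab (norm_nonneg z)

lemma exists_eq_zero_forall_pos_Ico {g : ℝ → ℝ} (hg : Continuous g) {a b : ℝ} (hab : a ≤ b)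
    (ha : 0 < g a) (hb : g b ≤ 0) : ∃ c ∈ Ioc a b, g c = 0 ∧ ∀ t ∈ Ico a c, 0 < g t := by
  set S := Icc a b ∩ {t | g t ≤ 0}
  have hS : IsCompact S := isCompact_Icc.inter_right (isClosed_le hg continuous_const)
  have hcS : sInf S ∈ S := hS.sInf_mem ⟨b, ⟨hab, le_rfl⟩, hb⟩
  have hpos : ∀ t ∈ Ico a (sInf S), 0 < g t := fun t ht => not_le.1 fun h =>
    (csInf_le hS.bddBelow ⟨⟨ht.1, ht.2.le.trans hcS.1.2⟩, h⟩).not_gt ht.2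
  have hac : a < sInf S := hcS.1.1.lt_of_ne fun h => (h ▸ ha).not_ge hcS.2
  obtain ⟨t, ht, hgt⟩ := intermediate_value_Icc' hac.le hg.continuousOn ⟨hcS.2, ha.le⟩
  have htc : t = sInf S := ht.2.eq_of_not_lt fun h => (hpos t ⟨ht.1, h⟩).ne' hgt
  exact ⟨sInf S, ⟨hac, hcS.1.2⟩, htc ▸ hgt, hpos⟩

lemma exists_mem_frequently_inf'_eq {ι α β : Type*} [LinearOrder β] {l : Filter α} [l.NeBot]
    {S : Finset ι} (hS : S.Nonempty) (f : ι → α → β) :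
    ∃ i ∈ S, ∃ᶠ t in l, S.inf' hS (f · t) = f i t := by
  by_contra! h
  obtain ⟨t, ht⟩ := ((eventually_all_finset S).2 h).exists
  obtain ⟨i, hi, hit⟩ := S.exists_mem_eq_inf' hS (f · t)
  exact ht i hi hit

/-- The hypotheses make `y - x` a positive multiple of `(sin θ, -cos θ)`. -/
lemma leftOf_of_frequently_height_lt {V : Finset (ℝ × ℝ)} {θ : ℝ} {x y : ℝ × ℝ}
    (hxy : height θ x = height θ y) (hfreq : ∃ᶠ φ in 𝓝[<] θ, height φ x < height φ y)
    (hV : ∀ p ∈ V, height θ x ≤ height θ p) : LeftOf x y V := by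
  set s := (y.1 - x.1) * sin θ - (y.2 - x.2) * cos θ
  have hrot : ∀ φ, height φ y - height φ x = s * sin (θ - φ) := fun φ => by
    simp only [height, s, sin_sub] at hxy ⊢
    linear_combination (-(cos θ * cos φ + sin θ * sin φ)) * hxy -
      ((y.1 - x.1) * cos φ + (y.2 - x.2) * sin φ) * sin_sq_add_cos_sq θ
  have hs : 0 < s := by
    obtain ⟨φ, hφ, hφθ⟩ := (hfreq.and_eventually (Ioo_mem_nhdsLT (sub_lt_self θ pi_pos))).exists
    have hsin : 0 < sin (θ - φ) :=
      sin_pos_of_pos_of_lt_pi (by linarith [hφθ.2]) (by linarith [hφθ.1])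
    exact (pos_iff_pos_of_mul_pos (by linarith [hrot φ] : 0 < s * sin (θ - φ))).2 hsin
  intro p hp
  have hcross : cross2 (y - x) (p - x) = s * (height θ p - height θ x) := by
    simp only [cross2, height, s, Prod.fst_sub, Prod.snd_sub] at hxy ⊢
    linear_combination (-((p.2 - x.2) * cos θ - (p.1 - x.1) * sin θ)) * hxy -
      ((y.1 - x.1) * (p.2 - x.2) - (y.2 - x.2) * (p.1 - x.1)) * sin_sq_add_cos_sq θ
  rw [hcross]
  exact mul_nonneg hs.le (sub_nonneg.2 (hV p hp))

lemma Protrudes.exists_minHeight_lt {A B : Finset (ℝ × ℝ)} (h : Protrudes A B)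
    (hA : A.Nonempty) (hB : B.Nonempty) : ∃ θ, minHeight A hA θ < minHeight B hB θ := by
  obtain ⟨θ, a, ha, hlt⟩ := h
  exact ⟨θ, (A.inf'_le _ ha).trans_lt ((B.lt_inf'_iff hB).2 hlt)⟩

/-- Let `θ` be the first angle after one where `A` protrudes from `B` at which `A` and `B` have
the same minimal height. A point `x ∈ A` that is lowest in `A` for angles arbitrarily close
below `θ` lies outside `B`, and together with a lowest point of `B` at `θ` it spans the bridge. -/
theorem exists_isBridge_fst_notMem {A B : Finset (ℝ × ℝ)} (hAB : Protrudes A B)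
    (hBA : Protrudes B A) : ∃ e, IsBridge A B e ∧ e.1 ∉ B := by
  have hA := hAB.nonempty
  have hB := hBA.nonempty
  obtain ⟨θa, hθa⟩ := hAB.exists_minHeight_lt hA hB
  obtain ⟨θb, hθb⟩ := hBA.exists_minHeight_lt hB hA
  obtain ⟨k, hk⟩ := exists_int_gt ((θa - θb) / (2 * π))
  have hab : θa ≤ θb + k * (2 * π) := by
    rw [div_lt_iff₀ two_pi_pos] at hk; linarith
  obtain ⟨θ, hθ, hgθ, hpos⟩ := exists_eq_zero_forall_pos_Ico
    (g := fun θ => minHeight B hB θ - minHeight A hA θ)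
    ((continuous_minHeight hB).sub (continuous_minHeight hA)) hab (sub_pos.2 hθa)
    (by simp only [minHeight_add_int_mul_two_pi]; linarith)
  have hnear : ∀ᶠ φ in 𝓝[<] θ, minHeight A hA φ < minHeight B hB φ :=
    mem_of_superset (Ioo_mem_nhdsLT hθ.1) fun φ hφ => sub_pos.1 (hpos φ ⟨hφ.1.le, hφ.2⟩)
  obtain ⟨x, hxA, hx⟩ := exists_mem_frequently_inf'_eq (l := 𝓝[<] θ) hA (fun p φ => height φ p)
  have hxθ : minHeight A hA θ = height θ x :=
    (isClosed_eq (continuous_minHeight hA) (continuous_height x)).mem_of_frequently_of_tendsto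
      hx (tendsto_id.mono_left nhdsWithin_le_nhds)
  obtain ⟨y, hyB, hyθ⟩ : ∃ y ∈ B, minHeight B hB θ = height θ y := B.exists_mem_eq_inf' hB _
  have hbelow : ∃ᶠ φ in 𝓝[<] θ, height φ x < minHeight B hB φ :=
    (hx.and_eventually hnear).mono fun φ ⟨hφx, hφ⟩ => hφx ▸ hφ
  refine ⟨(x, y), ⟨hxA, hyB, leftOf_of_frequently_height_lt (θ := θ) ?_ ?_ ?_⟩, ?_⟩
  · linarith
  · exact hbelow.mono fun φ hφ => hφ.trans_le (B.inf'_le _ hyB)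
  · intro p hp
    rcases Finset.mem_union.1 hp with hp | hp
    · exact hxθ ▸ A.inf'_le _ hp
    · have hBp : minHeight B hB θ ≤ height θ p := B.inf'_le _ hp
      change height θ x ≤ height θ p
      linarith
  · obtain ⟨φ, hφ⟩ := hbelow.exists
    exact fun hxB => (B.inf'_le (height φ) hxB).not_gt hφ

def reflect (p : ℝ × ℝ) : ℝ × ℝ := (p.1, -p.2)

lemma height_reflect (θ : ℝ) (p : ℝ × ℝ) : height θ (reflect p) = height (-θ) p := by
  simp only [height, reflect, cos_neg, sin_neg]; ring

lemma Protrudes.image_reflect {A B : Finset (ℝ × ℝ)} (h : Protrudes A B) :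
    Protrudes (A.image reflect) (B.image reflect) := by
  obtain ⟨θ, a, ha, hlt⟩ := h
  refine ⟨-θ, reflect a, Finset.mem_image_of_mem _ ha, ?_⟩
  simpa only [Finset.forall_mem_image, height_reflect, neg_neg] using hlt

lemma leftOf_image_reflect {u w : ℝ × ℝ} {V : Finset (ℝ × ℝ)} :
    LeftOf (reflect u) (reflect w) (V.image reflect) ↔ LeftOf w u V := by
  simp only [LeftOf, Finset.forall_mem_image]
  refine forall₂_congr fun p _ => ?_
  rw [show cross2 (reflect w - reflect u) (reflect p - reflect u) = cross2 (u - w) (p - w) by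
    simp only [cross2, reflect, Prod.fst_sub, Prod.snd_sub]; ring]

/-- Reflection reverses orientation: a bridge `u → w` from the mirror image of `B` to that of
`A` is the mirror image of a bridge `w → u` from `A` to `B`. -/
theorem exists_isBridge_snd_notMem {A B : Finset (ℝ × ℝ)} (hAB : Protrudes A B)
    (hBA : Protrudes B A) : ∃ e, IsBridge A B e ∧ e.2 ∉ A := by
  obtain ⟨⟨u', w'⟩, ⟨hu', hw', hL⟩, hu'A⟩ :=
    exists_isBridge_fst_notMem hBA.image_reflect hAB.image_reflect
  obtain ⟨u, hu, rfl⟩ := Finset.mem_image.1 hu'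
  obtain ⟨w, hw, rfl⟩ := Finset.mem_image.1 hw'
  refine ⟨(w, u), ⟨hw, hu, ?_⟩, fun h => hu'A (Finset.mem_image_of_mem _ h)⟩
  rw [← leftOf_image_reflect, Finset.image_union, Finset.union_comm]
  exact hL

section Bridges

variable {P A B : Finset (ℝ × ℝ)} (hP : InGeneralPosition P) (hA : IsConvexIn P A)
  (hB : IsConvexIn P B) (hAB : ¬ A ⊆ B) (hBA : ¬ B ⊆ A)

include hA hB hAB in
lemma protrudes_of_not_subset : Protrudes A B := by
  obtain ⟨a, ha, haB⟩ := Finset.not_subset.1 hAB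
  exact protrudes_of_notMem_convexHull ha fun h => haB (hB.mem_of_mem_convexHull (hA.subset ha) h)

include hP hA hB hAB hBA

theorem existsUnique_isBridge_fst_notMem
    (hpre : IsPreconnected (convexHull ℝ (A : Set (ℝ × ℝ)) \ convexHull ℝ (B : Set (ℝ × ℝ)))) :
    ∃! e, IsBridge A B e ∧ e.1 ∉ B := by
  obtain ⟨e, he⟩ := exists_isBridge_fst_notMem (protrudes_of_not_subset hA hB hAB)
    (protrudes_of_not_subset hB hA hBA)
  exact ⟨e, he, fun e' he' => IsBridge.eq_of_fst_notMem hP hA hB hpre he'.1 he.1 he'.2 he.2⟩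

theorem existsUnique_isBridge_snd_notMem
    (hpre : IsPreconnected (convexHull ℝ (B : Set (ℝ × ℝ)) \ convexHull ℝ (A : Set (ℝ × ℝ)))) :
    ∃! e, IsBridge A B e ∧ e.2 ∉ A := by
  obtain ⟨e, he⟩ := exists_isBridge_snd_notMem (protrudes_of_not_subset hA hB hAB)
    (protrudes_of_not_subset hB hA hBA)
  exact ⟨e, he, fun e' he' => IsBridge.eq_of_snd_notMem hP hA hB hpre he'.1 he.1 he'.2 he.2⟩

end Bridges

/-- For two incomparable members `A, B` of a family of convex
pseudo-discs of a point set `P` in general position, exactly one of the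
following holds: (1) there is exactly one common tangent of the first kind
with respect to `(A,B)` and none of the second kind; (2) there is none of the
first kind and exactly two of the second kind. -/
theorem stmt8 (P : Finset (ℝ × ℝ))
    (hgen : ∀ p ∈ P, ∀ q ∈ P, ∀ r ∈ P, p ≠ q → p ≠ r → q ≠ r →
      ¬ Collinear ℝ ({p, q, r} : Set (ℝ × ℝ)))
    (F : Finset (Finset (ℝ × ℝ)))
    (hconv : ∀ A ∈ F, ∃ C : Set (ℝ × ℝ), Convex ℝ C ∧
      (A : Set (ℝ × ℝ)) = ↑P ∩ C)
    (hpd : ∀ A ∈ F, ∀ B ∈ F, A ≠ B →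
      IsPreconnected (convexHull ℝ (A : Set (ℝ × ℝ)) \ convexHull ℝ (B : Set (ℝ × ℝ))) ∧
      IsPreconnected (convexHull ℝ (B : Set (ℝ × ℝ)) \ convexHull ℝ (A : Set (ℝ × ℝ))))
    (A B : Finset (ℝ × ℝ)) (hA : A ∈ F) (hB : B ∈ F)
    (hAB : ¬ A ⊆ B) (hBA : ¬ B ⊆ A) :
    Xor'
      ((∃! e : (ℝ × ℝ) × (ℝ × ℝ), FirstKind P A B e) ∧
        ∀ e, ¬ SecondKind P A B e)
      ((∀ e, ¬ FirstKind P A B e) ∧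
        ∃ e₁ e₂, e₁ ≠ e₂ ∧ SecondKind P A B e₁ ∧ SecondKind P A B e₂ ∧
          ∀ e, SecondKind P A B e → e = e₁ ∨ e = e₂) := by
  have hAcvx : IsConvexIn P A := hconv A hA
  have hBcvx : IsConvexIn P B := hconv B hB
  obtain ⟨hpreAB, hpreBA⟩ := hpd A hA B hB fun h => hAB (h ▸ subset_rfl)
  have hF : FirstKind P A B = fun e => IsBridge A B e ∧ e.1 ∉ B ∧ e.2 ∉ A :=
    funext fun e => propext (firstKind_iff hgen hAcvx hBcvx e)
  have hS : SecondKind P A B = fun e => IsBridge A B e ∧ Xor (e.1 ∉ B) (e.2 ∉ A) :=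
    funext fun e => propext (secondKind_iff hgen hAcvx hBcvx e)
  rw [hF, hS]
  exact xor_existsUnique_and_or_two
    (existsUnique_isBridge_fst_notMem hgen hAcvx hBcvx hAB hBA hpreAB)
    (existsUnique_isBridge_snd_notMem hgen hAcvx hBcvx hAB hBA hpreBA)
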